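/- arXiv:1805.04906 — 4 statements merged into one kernel-verified Lean document; each statement's English description precedes it below -/
import Mathlib

section
/- The divisor D in E^n defined by the equation m_1 P_1 + ... + m_n P_n = Q (where E is an elliptic curve, m_i are integers, and Q is a point of E) is connected if and only if gcd(m_1, ..., m_n) = 1. -/
/-!
If `gcd mᵢ = 1`, the divisor is the image in `Eⁿ` of the complex affine hyperplane
`∑ mᵢ zᵢ = q` (a lift of `Q`): Bézout coefficients `bᵢ` absorb the lattice error of any lift
`z` of a point of the divisor, via `zᵢ ↦ zᵢ - bᵢ (∑ mⱼ zⱼ - q)`. A convex set is connected.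

If `g = gcd mᵢ > 1`, write `m = g m'` with `gcd m'ᵢ = 1`, fix a point `P₀` of the divisor, and
read off the `τ`-coordinate `χ(P) ∈ ℝ/ℤ` of `∑ m'ᵢ (Pᵢ - P₀ᵢ)`. On the divisor `g χ = 0`, and the
`g`-torsion of `ℝ/ℤ` is finite, so `χ` is constant on a connected divisor. But translating `P₀` by
`(bᵢ τ / g)`, where `∑ m'ᵢ bᵢ = 1`, stays in the divisor and changes `χ` by `1/g ≠ 0`.
-/

open Finset Set

section ZSMulSum

variable {ι M : Type*} [Fintype ι]

def zsmulSum (R : Type*) [Semiring R] [AddCommGroup M] [Module R M] (m : ι → ℤ) :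
    (ι → M) →ₗ[R] M where
  toFun P := ∑ i, m i • P i
  map_add' P P' := by simp only [Pi.add_apply, smul_add, sum_add_distrib]
  map_smul' r P := by
    rw [RingHom.id_apply, smul_sum]
    exact sum_congr rfl fun i _ => smul_comm (m i) r (P i)

variable [AddCommGroup M]

theorem zsmulSum_apply (R : Type*) [Semiring R] [Module R M] (m : ι → ℤ) (P : ι → M) :
    zsmulSum R m P = ∑ i, m i • P i := rfl

theorem continuous_zsmulSum [TopologicalSpace M] [IsTopologicalAddGroup M] (m : ι → ℤ) :
    Continuous (zsmulSum ℤ m : (ι → M) → M) :=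
  continuous_finsetSum _ fun i _ => (continuous_zsmul (m i)).comp (continuous_apply i)

theorem zsmulSum_mul_left (R : Type*) [Semiring R] [Module R M] (g : ℤ) (m : ι → ℤ) :
    zsmulSum R (fun i => g * m i) = g • (zsmulSum R m : (ι → M) →ₗ[R] M) :=
  LinearMap.ext fun P => by simp only [zsmulSum_apply, LinearMap.smul_apply, smul_sum, mul_smul]

theorem sum_zsmul_zsmul (m b : ι → ℤ) (x : M) : ∑ i, m i • b i • x = (∑ i, m i * b i) • x := by
  simp only [smul_smul, sum_smul]

theorem exists_lift_of_sum_zsmul_eq {Λ : AddSubgroup M} {m : ι → ℤ} (hm : univ.gcd m = 1)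
    {P : ι → M ⧸ Λ} {q : M} (hP : ∑ i, m i • P i = q) :
    ∃ z : ι → M, ∑ i, m i • z i = q ∧ ∀ i, (z i : M ⧸ Λ) = P i := by
  obtain ⟨b, hb⟩ := gcd_eq_sum_mul univ m
  rw [hm] at hb
  choose z hz using fun i => QuotientAddGroup.mk_surjective (P i)
  set l := ∑ i, m i • z i - q
  have hl : l ∈ Λ := by
    rw [← QuotientAddGroup.eq_zero_iff, QuotientAddGroup.mk_sub, ← hP, QuotientAddGroup.mk_sum]
    simp only [QuotientAddGroup.mk_zsmul, hz, sub_self]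
  refine ⟨fun i => z i - b i • l, ?_, fun i => ?_⟩
  · simp only [smul_sub, sum_sub_distrib, sum_zsmul_zsmul, ← hb, one_smul, l]
    abel
  · rw [QuotientAddGroup.mk_sub, hz, sub_eq_self, QuotientAddGroup.eq_zero_iff]
    exact zsmul_mem hl _

end ZSMulSum

theorem isConnected_setOf_sum_zsmul_eq {ι V : Type*} [Fintype ι] [AddCommGroup V] [Module ℝ V]
    [TopologicalSpace V] [ContinuousAdd V] [ContinuousSMul ℝ V] (Λ : AddSubgroup V)
    {m : ι → ℤ} (hm : univ.gcd m = 1) (Q : V ⧸ Λ) :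
    IsConnected {P : ι → V ⧸ Λ | ∑ i, m i • P i = Q} := by
  obtain ⟨q, rfl⟩ := QuotientAddGroup.mk_surjective Q
  obtain ⟨b, hb⟩ := gcd_eq_sum_mul univ m
  rw [hm] at hb
  set H := zsmulSum ℝ m ⁻¹' {q}
  have hH : Convex ℝ H := (convex_singleton q).linear_preimage _
  have hne : H.Nonempty := ⟨fun i => b i • q, by simp [H, zsmulSum_apply, sum_zsmul_zsmul, ← hb]⟩
  have hImage : (fun z i => (z i : V ⧸ Λ)) '' H = {P : ι → V ⧸ Λ | ∑ i, m i • P i = q} := by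
    ext P
    constructor
    · rintro ⟨z, hz, rfl⟩
      rw [mem_ofPred_eq, ← hz, zsmulSum_apply, QuotientAddGroup.mk_sum]
      simp only [QuotientAddGroup.mk_zsmul]
    · intro hP
      obtain ⟨z, hz, hzP⟩ := exists_lift_of_sum_zsmul_eq hm hP
      exact ⟨z, hz, funext hzP⟩
  rw [← hImage]
  exact (hH.isConnected hne).image _
    (continuous_pi fun i => continuous_quotient_mk'.comp (continuous_apply i)).continuousOn

/-- The coordinate `y` of `z = x + y τ`, well defined modulo `ℤ`. -/
noncomputable def tauCoord (τ : ℂ) : ℂ ⧸ AddSubgroup.closure {1, τ} →+ AddCircle (1 : ℝ) :=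
  QuotientAddGroup.map _ _ (AddMonoidHom.mk' (fun z => z.im / τ.im) fun z w => add_div _ _ _) <| by
    simp only [AddSubgroup.closure_le, Set.insert_subset_iff, Set.singleton_subset_iff]
    constructor
    · simp
    · rcases eq_or_ne τ.im 0 with h | h <;> simp [h]

theorem tauCoord_mk (τ z : ℂ) : tauCoord τ z = ((z.im / τ.im : ℝ) : AddCircle (1 : ℝ)) := rfl

theorem continuous_tauCoord (τ : ℂ) : Continuous (tauCoord τ) :=
  (QuotientAddGroup.isQuotientMap_mk _).continuous_iff.2 <|
    continuous_quotient_mk'.comp (Complex.continuous_im.div_const _)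

theorem tauCoord_div_intCast {τ : ℂ} (hτ : τ.im ≠ 0) (g : ℤ) :
    tauCoord τ ((τ / g : ℂ) : ℂ ⧸ AddSubgroup.closure {1, τ}) =
      (((g : ℝ)⁻¹ : ℝ) : AddCircle (1 : ℝ)) := by
  rw [tauCoord_mk, Complex.div_intCast_im, div_right_comm, div_self hτ, one_div]

theorem eq_one_of_coe_inv_eq_zero {g : ℤ} (hg : 0 < g)
    (h : (((g : ℝ)⁻¹ : ℝ) : AddCircle (1 : ℝ)) = 0) : g = 1 := by
  obtain ⟨k, hk⟩ := (AddCircle.coe_eq_zero_iff 1).1 h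
  rw [zsmul_eq_mul, mul_one] at hk
  have hkg : (k : ℝ) * g = 1 := by rw [hk, inv_mul_cancel₀ (Int.cast_pos.2 hg).ne']
  exact Int.eq_one_of_mul_eq_one_left hg.le (by exact_mod_cast hkg)

theorem IsPreconnected.eq_of_zsmul_eq_zero {X : Type*} [TopologicalSpace X] {S : Set X}
    (hS : IsPreconnected S) {p : ℝ} {χ : X → AddCircle p} (hχ : ContinuousOn χ S) {g : ℤ}
    (hg : g ≠ 0) (hgχ : ∀ x ∈ S, g • χ x = 0) {x y : X} (hx : x ∈ S) (hy : y ∈ S) :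
    χ x = χ y := by
  have hfin : {z : AddCircle p | g • z = 0}.Finite :=
    AddCircle.finite_torsion_of_isSMulRegular_int _ _ <|
      .of_right_eq_zero_of_smul fun z hz => by simpa [hg] using hz
  exact hS.constant_of_mapsTo hfin.isDiscrete hχ hgχ hx hy

theorem gcd_eq_one_of_isConnected {ι : Type*} [Fintype ι] {τ : ℂ} (hτ : τ.im ≠ 0) {m : ι → ℤ}
    (hm : m ≠ 0) {Q : ℂ ⧸ AddSubgroup.closure {1, τ}}
    (hD : IsConnected {P : ι → ℂ ⧸ AddSubgroup.closure {1, τ} | ∑ i, m i • P i = Q}) :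
    univ.gcd m = 1 := by
  replace hD : IsConnected (zsmulSum ℤ m ⁻¹' {Q}) := hD
  obtain ⟨i₀, -⟩ := Function.ne_iff.1 hm
  obtain ⟨m', hmm', hm'⟩ := extract_gcd m ⟨i₀, mem_univ i₀⟩
  set g := univ.gcd m
  have hg : 0 < g := by
    refine lt_of_le_of_ne (Int.nonneg_of_normalize_eq_self normalize_gcd) fun h => hm ?_
    exact funext fun i => Finset.gcd_eq_zero_iff.1 h.symm i (mem_univ i)
  rw [show m = fun i => g * m' i from funext fun i => hmm' i (mem_univ i),
    zsmulSum_mul_left] at hD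
  obtain ⟨b, hb⟩ := gcd_eq_sum_mul univ m'
  rw [hm'] at hb
  obtain ⟨P₀, hP₀⟩ := hD.nonempty
  set k : ι → ℂ ⧸ AddSubgroup.closure {1, τ} := fun i => b i • ((τ / g : ℂ) : _)
  have hk : zsmulSum ℤ m' k = ((τ / g : ℂ) : _) := by
    rw [zsmulSum_apply, sum_zsmul_zsmul, ← hb, one_smul]
  have hP₀k : (g • zsmulSum ℤ m') (P₀ + k) = Q := by
    rw [map_add, hP₀, add_eq_left, LinearMap.smul_apply, hk,
      ← QuotientAddGroup.mk_zsmul, zsmul_eq_mul, mul_div_cancel₀ _ (by exact_mod_cast hg.ne'),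
      QuotientAddGroup.eq_zero_iff]
    exact AddSubgroup.subset_closure (by simp)
  have hχ := hD.isPreconnected.eq_of_zsmul_eq_zero
    (χ := fun P => tauCoord τ (zsmulSum ℤ m' (P - P₀)))
    ((continuous_tauCoord τ).comp
      ((continuous_zsmulSum m').comp (continuous_sub_right P₀))).continuousOn
    hg.ne' (fun P hP => by
      rw [← map_zsmul, ← LinearMap.smul_apply, map_sub, mem_preimage.1 hP, hP₀, sub_self, map_zero])
    hP₀k hP₀
  simp only [add_sub_cancel_left, sub_self, map_zero, hk, tauCoord_div_intCast hτ] at hχ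
  exact eq_one_of_coe_inv_eq_zero hg hχ

/-- The divisor `D ⊆ Eⁿ` defined by `∑ mᵢ Pᵢ = Q`, where `E = ℂ/Λ` is an
elliptic curve (a complex torus) and the `mᵢ` are integers (not all zero, so that `D` is
a divisor), is connected if and only if `gcd(m₁,…,mₙ) = 1`. -/
theorem divisor_connected_iff_gcd_eq_one
    (τ : ℂ) (hτ : τ.im ≠ 0)
    (Λ : AddSubgroup ℂ) (hΛ : Λ = AddSubgroup.closure {1, τ})
    (n : ℕ) (m : Fin n → ℤ) (hm : m ≠ 0) (Q : ℂ ⧸ Λ) :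
    IsConnected {P : Fin n → ℂ ⧸ Λ | ∑ i, m i • P i = Q} ↔
      Finset.univ.gcd m = 1 := by
  subst hΛ
  exact ⟨gcd_eq_one_of_isConnected hτ hm, fun h => isConnected_setOf_sum_zsmul_eq _ h Q⟩
end

section
/- The alternating sum Σ_{i=0}^{n-1-k} (-1)^i · [n, k+i+1] · binomial(k+i, k) equals [n-1, k], where [a,b] denotes the unsigned Stirling number of the first kind. -/
/-!
`stirling1 n m` is the coefficient of `x ^ m` in the rising factorial `x (x + 1) ⋯ (x + n - 1)`.
Since `x⁽ⁿ⁺¹⁾ = x · (x + 1)⁽ⁿ⁾`, expanding `(x + 1) ^ j` gives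
`[n + 1, m + 1] = ∑ⱼ [n, j] C(j, m)`. The claimed sum is the binomial inversion of this
expansion: substituting it and summing over `i` first leaves
`∑ᵢ (-1)ⁱ C(j, k + i) C(k + i, k) = C(j, k) ∑ᵢ (-1)ⁱ C(j - k, i) = δⱼₖ`.
-/

/-- The unsigned Stirling numbers of the first kind: `stirling1 n m` counts permutations of an
`n`-element set with exactly `m` cycles. -/
def stirling1 : ℕ → ℕ → ℕ
  | 0, 0 => 1
  | 0, _ + 1 => 0
  | _ + 1, 0 => 0
  | n + 1, m + 1 => stirling1 n m + n * stirling1 n (m + 1)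

open Polynomial Finset

theorem Polynomial.coeff_comp_X_add_one {R : Type*} [Semiring R] (p : R[X]) {N : ℕ}
    (hN : p.natDegree < N) (m : ℕ) :
    (p.comp (X + 1)).coeff m = ∑ j ∈ range N, p.coeff j * (j.choose m : R) := by
  conv_lhs => rw [p.as_sum_range_C_mul_X_pow' hN]
  simp [sum_comp, coeff_X_add_one_pow]

theorem coeff_ascPochhammer_eq_stirling1 (S : Type*) [Semiring S] (n m : ℕ) :
    (ascPochhammer S n).coeff m = stirling1 n m := by
  induction n generalizing m with
  | zero => cases m <;> simp [stirling1, coeff_one]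
  | succ n ih =>
    cases m with
    | zero => simp [ascPochhammer_succ_left, stirling1]
    | succ m =>
      rw [ascPochhammer_succ_right, mul_add, coeff_add, coeff_mul_X, ← C_eq_natCast, coeff_mul_C,
        ih, ih, stirling1, Nat.cast_add, Nat.cast_mul, Nat.cast_comm n]

theorem stirling1_succ_succ_eq_sum_choose (n m : ℕ) :
    stirling1 (n + 1) (m + 1) = ∑ j ∈ range (n + 1), stirling1 n j * j.choose m := by
  rw [← Nat.cast_id (stirling1 _ _), ← coeff_ascPochhammer_eq_stirling1, ascPochhammer_succ_left,
    coeff_X_mul, coeff_comp_X_add_one _ (N := n + 1) (by rw [ascPochhammer_natDegree]; omega)]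
  simp [coeff_ascPochhammer_eq_stirling1]

theorem Int.alternating_sum_range_choose_of_lt {d M : ℕ} (h : d < M) :
    ∑ i ∈ Finset.range M, (-1 : ℤ) ^ i * d.choose i = if d = 0 then 1 else 0 := by
  rw [← Int.alternating_sum_range_choose]
  refine (sum_subset (range_subset_range.2 h) fun i _ hi => ?_).symm
  rw [Nat.choose_eq_zero_of_lt (by simpa using hi), Nat.cast_zero, mul_zero]

theorem Int.alternating_sum_range_choose_mul_choose {j k M : ℕ} (h : j < k + M) :
    ∑ i ∈ Finset.range M, (-1 : ℤ) ^ i * (j.choose (k + i) * (k + i).choose k : ℕ) =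
      if j = k then 1 else 0 := by
  simp_rw [Nat.choose_mul (Nat.le_add_right k _), Nat.add_sub_cancel_left, Nat.cast_mul,
    mul_left_comm _ (j.choose k : ℤ), ← mul_sum]
  rcases lt_or_ge j k with hjk | hkj
  · simp [Nat.choose_eq_zero_of_lt hjk, hjk.ne]
  · rw [Int.alternating_sum_range_choose_of_lt (M := M) (by omega)]
    rcases eq_or_ne j k with rfl | hne
    · simp
    · simp [hne, show j - k ≠ 0 by omega]

/-- `Σ_{i=0}^{n-1-k} (-1)^i [n, k+i+1] C(k+i, k) = [n-1, k]`. -/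
theorem alternating_sum_stirling1 (n k : ℕ) (h : k < n) :
    (∑ i ∈ Finset.range (n - k),
        (-1 : ℤ) ^ i * stirling1 n (k + i + 1) * (k + i).choose k) =
      stirling1 (n - 1) k := by
  obtain ⟨N, rfl⟩ : ∃ N, n = N + 1 := ⟨n - 1, by omega⟩
  calc ∑ i ∈ range (N + 1 - k), (-1 : ℤ) ^ i * stirling1 (N + 1) (k + i + 1) * (k + i).choose k
      = ∑ j ∈ range (N + 1), (stirling1 N j : ℤ) *
          ∑ i ∈ range (N + 1 - k), (-1 : ℤ) ^ i * (j.choose (k + i) * (k + i).choose k : ℕ) := by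
        simp_rw [stirling1_succ_succ_eq_sum_choose, Nat.cast_sum, mul_sum, sum_mul]
        rw [sum_comm]
        refine sum_congr rfl fun j _ => sum_congr rfl fun i _ => ?_
        push_cast
        ring
    _ = ∑ j ∈ range (N + 1), (stirling1 N j : ℤ) * if j = k then 1 else 0 := by
        refine sum_congr rfl fun j hj => ?_
        have hj : j < k + (N + 1 - k) := by have := mem_range.1 hj; omega
        rw [Int.alternating_sum_range_choose_mul_choose hj]
    _ = stirling1 (N + 1 - 1) k := by
        simp [mem_range.2 (show k < N + 1 by omega)]
end

section
/- Let C = (c_1, ..., c_k) be a circuit (an oriented simple cycle with a starting vertex) in K_n and let C~ be the circuit obtained from C by reversing the orientation. Then the element L_{C~} = (−1)^{binomial(k−2,2)} L_C, where L_C = Σ_{1 ≤ i < j ≤ k} (−1)^{i+j} (x_{t(c_i)} − x_{s(c_i)}) ω_{C∖{c_i,c_j}} in the exterior-algebra model. -/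
open ExteriorAlgebra

/-- The free exterior algebra on anticommuting degree-one generators `x_i` (`i ∈ Fin n`)
and `ω_e` (`e` an unordered edge of `K_n`). -/
abbrev FreeExt (n : ℕ) := ExteriorAlgebra ℚ ((Fin n ⊕ Sym2 (Fin n)) → ℚ)

/-- The generator `x_i`. -/
noncomputable def xgen (n : ℕ) (i : Fin n) : FreeExt n :=
  ExteriorAlgebra.ι ℚ (Pi.single (Sum.inl i) 1)

/-- The generator `ω_e` for an unordered edge `e` (so `ω_{i,j} = ω_{j,i}`). -/
noncomputable def wgen (n : ℕ) (e : Sym2 (Fin n)) : FreeExt n :=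
  ExteriorAlgebra.ι ℚ (Pi.single (Sum.inr e) 1)

/-- The relations of the (Kriz/Bibby) model: `(x_i − x_j)·ω_{i,j} = 0` and the
Orlik–Solomon (Arnold) relations `ω_{ij}ω_{jk} + ω_{jk}ω_{ik} + ω_{ik}ω_{ij} = 0`. -/
inductive ModelRel (n : ℕ) : FreeExt n → FreeExt n → Prop
  | xrel (i j : Fin n) : ModelRel n ((xgen n i - xgen n j) * wgen n s(i, j)) 0
  | arnold (i j k : Fin n) :
      ModelRel n (wgen n s(i, j) * wgen n s(j, k) + wgen n s(j, k) * wgen n s(i, k) +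
        wgen n s(i, k) * wgen n s(i, j)) 0

/-- The quotient algebra by the model relations. -/
abbrev ModelAlg (n : ℕ) := RingQuot (ModelRel n)

noncomputable def xq (n : ℕ) (i : Fin n) : ModelAlg n :=
  RingQuot.mkAlgHom ℚ (ModelRel n) (xgen n i)

noncomputable def wq (n : ℕ) (e : Sym2 (Fin n)) : ModelAlg n :=
  RingQuot.mkAlgHom ℚ (ModelRel n) (wgen n e)

/-- `ω_{C ∖ {c_i, c_j}}`: the ordered product of the generators of the remaining edges of the
circuit `C` (edges being recorded as ordered pairs `(s(c), t(c))`). -/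
noncomputable def omegaRest (n k : ℕ) (C : Fin k → Fin n × Fin n) (i j : Fin k) : ModelAlg n :=
  (((List.finRange k).filter (fun a => a ≠ i ∧ a ≠ j)).map
    (fun a => wq n (Sym2.mk (C a).1 (C a).2))).prod

/-- `L_C = Σ_{i<j} (−1)^{i+j} (x_{t(c_i)} − x_{s(c_i)}) ω_{C∖{c_i,c_j}}`. -/
noncomputable def Lelt (n k : ℕ) (C : Fin k → Fin n × Fin n) : ModelAlg n :=
  ∑ p ∈ Finset.univ.filter (fun p : Fin k × Fin k => p.1 < p.2),
    ((-1 : ℚ) ^ ((p.1 : ℕ) + (p.2 : ℕ))) •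
      ((xq n (C p.1).2 - xq n (C p.1).1) * omegaRest n k C p.1 p.2)

/-!
Reversal matches the term `(i, j)` of `L_{C~}` with the term `(k-1-j, k-1-i)` of `L_C`. Their
`ω`-factors are the same `k - 2` edges in opposite order, and reversing a product of `m`
anticommuting degree-one elements costs `(-1)^binom(m,2)`. Their `x`-factors are the boundary
`x_s - x_t` of the later edge and the boundary `x_t - x_s` of the earlier one; these agree on
`ω_{C∖{c_i,c_j}}`, because the boundaries of all edges of a circuit sum to zero while the boundary
of every other edge `c` kills that product (`(x_t - x_s) ω_c = 0`, and `x_t - x_s` anticommutes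
with every `ω`).
-/

section AnticommutingProducts

variable {R A : Type*} [CommRing R] [Ring A] [Algebra R A]

theorem List.mul_prod_eq_zero_of_anticomm {y w₀ : A} {l : List A}
    (hanti : ∀ w ∈ l, y * w = -(w * y)) (hw₀ : w₀ ∈ l) (hy : y * w₀ = 0) :
    y * l.prod = 0 := by
  induction l with
  | nil => simp at hw₀
  | cons w t ih =>
    rw [List.prod_cons, ← mul_assoc]
    rcases List.mem_cons.mp hw₀ with rfl | hw₀
    · rw [hy, zero_mul]
    · rw [hanti w List.mem_cons_self, neg_mul, mul_assoc,
        ih (fun v hv => hanti v (List.mem_cons_of_mem w hv)) hw₀, mul_zero, neg_zero]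

theorem List.prod_mul_eq_smul_of_anticomm {e : A} {l : List A}
    (hanti : ∀ w ∈ l, w * e = -(e * w)) :
    l.prod * e = ((-1 : R) ^ l.length) • (e * l.prod) := by
  induction l with
  | nil => simp
  | cons w t ih =>
    rw [List.prod_cons, mul_assoc, ih (fun v hv => hanti v (List.mem_cons_of_mem w hv)),
      mul_smul_comm, ← mul_assoc, hanti w List.mem_cons_self, List.length_cons, pow_succ,
      mul_neg_one, neg_smul, neg_mul, smul_neg, mul_assoc]

theorem List.prod_reverse_of_pairwise_anticomm {l : List A}
    (hanti : l.Pairwise fun a b => a * b = -(b * a)) :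
    l.reverse.prod = ((-1 : R) ^ l.length.choose 2) • l.prod := by
  induction l with
  | nil => simp
  | cons e t ih =>
    rw [List.pairwise_cons] at hanti
    have hcomm : ∀ w ∈ t, w * e = -(e * w) := fun w hw => by
      rw [hanti.1 w hw, neg_neg]
    rw [List.reverse_cons, List.prod_append, ih hanti.2, List.prod_singleton, smul_mul_assoc,
      List.prod_mul_eq_smul_of_anticomm (R := R) hcomm, smul_smul, ← pow_add, List.length_cons,
      Nat.choose_succ_succ, Nat.choose_one_right, add_comm, List.prod_cons]

end AnticommutingProducts

section ModelAlgebra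

variable {n : ℕ}

theorem mkAlgHom_ι_mul_comm (u v : (Fin n ⊕ Sym2 (Fin n)) → ℚ) :
    RingQuot.mkAlgHom ℚ (ModelRel n) (ι ℚ u) * RingQuot.mkAlgHom ℚ (ModelRel n) (ι ℚ v) =
      -(RingQuot.mkAlgHom ℚ (ModelRel n) (ι ℚ v) * RingQuot.mkAlgHom ℚ (ModelRel n) (ι ℚ u)) := by
  have h := congrArg (RingQuot.mkAlgHom ℚ (ModelRel n)) (ι_add_mul_swap u v)
  rw [map_add, map_mul, map_mul, map_zero] at h
  exact eq_neg_of_add_eq_zero_left h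

theorem wq_mul_comm (e f : Sym2 (Fin n)) : wq n e * wq n f = -(wq n f * wq n e) :=
  mkAlgHom_ι_mul_comm _ _

theorem xq_sub_xq_mul_wq_comm (a b : Fin n) (e : Sym2 (Fin n)) :
    (xq n a - xq n b) * wq n e = -(wq n e * (xq n a - xq n b)) := by
  have hdiff : xq n a - xq n b = RingQuot.mkAlgHom ℚ (ModelRel n)
      (ι ℚ (Pi.single (Sum.inl a) 1 - Pi.single (Sum.inl b) 1)) := by
    rw [map_sub, map_sub, xq, xq, xgen, xgen]
  rw [hdiff, wq, wgen, mkAlgHom_ι_mul_comm]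

theorem xq_sub_xq_mul_wq_self (a b : Fin n) : (xq n a - xq n b) * wq n s(a, b) = 0 := by
  rw [xq, xq, wq]
  simpa only [map_mul, map_sub, map_zero] using
    RingQuot.mkAlgHom_rel ℚ (ModelRel.xrel (n := n) a b)

end ModelAlgebra

section Circuit

variable {n k : ℕ} (C : Fin k → Fin n × Fin n)

theorem length_filter_finRange_ne_ne {i j : Fin k} (hij : i ≠ j) :
    ((List.finRange k).filter fun a => a ≠ i ∧ a ≠ j).length = k - 2 := by
  classical
  rw [← List.toFinset_card_of_nodup ((List.nodup_finRange k).filter _)]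
  have hcompl : ((List.finRange k).filter fun a => a ≠ i ∧ a ≠ j).toFinset = {i, j}ᶜ := by
    ext a
    simp
  rw [hcompl, Finset.card_compl, Finset.card_pair hij, Fintype.card_fin]

theorem filter_finRange_map_rev (i j : Fin k) :
    ((List.finRange k).filter fun a => a ≠ i ∧ a ≠ j).map Fin.rev =
      ((List.finRange k).filter fun a => a ≠ j.rev ∧ a ≠ i.rev).reverse := by
  rw [← List.filter_reverse, List.finRange_reverse, List.filter_map]
  congr 2
  ext a
  simp only [Function.comp, ne_eq, decide_eq_decide, Fin.rev_eq_iff, Fin.rev_rev]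
  tauto

theorem omegaRest_reverse (i j : Fin k) (hij : i ≠ j) :
    omegaRest n k (fun a => Prod.swap (C (Fin.rev a))) i j =
      ((-1 : ℚ) ^ (k - 2).choose 2) • omegaRest n k C j.rev i.rev := by
  have hedges : omegaRest n k (fun a => Prod.swap (C (Fin.rev a))) i j =
      ((((List.finRange k).filter fun a => a ≠ j.rev ∧ a ≠ i.rev).map
        fun a => wq n s((C a).1, (C a).2)).reverse).prod := by
    rw [omegaRest, ← List.map_reverse, ← filter_finRange_map_rev, List.map_map]
    congr 2
    ext a
    exact congrArg (wq n) Sym2.eq_swap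
  rw [hedges, List.prod_reverse_of_pairwise_anticomm (R := ℚ)
      (List.pairwise_map.mpr (List.pairwise_of_forall fun _ _ => wq_mul_comm _ _)),
    List.length_map, length_filter_finRange_ne_ne (Fin.rev_injective.ne hij.symm), omegaRest]

theorem target_sub_source_mul_omegaRest {i j a : Fin k} (hai : a ≠ i) (haj : a ≠ j) :
    (xq n (C a).2 - xq n (C a).1) * omegaRest n k C i j = 0 := by
  have hmem : wq n s((C a).1, (C a).2) ∈
      ((List.finRange k).filter fun b => b ≠ i ∧ b ≠ j).map fun b => wq n s((C b).1, (C b).2) :=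
    List.mem_map_of_mem (List.mem_filter.mpr ⟨List.mem_finRange a, by simp [hai, haj]⟩)
  refine List.mul_prod_eq_zero_of_anticomm ?_ hmem
    (by rw [Sym2.eq_swap]; exact xq_sub_xq_mul_wq_self _ _)
  simp only [List.mem_map]
  rintro _ ⟨b, -, rfl⟩
  exact xq_sub_xq_mul_wq_comm _ _ _

variable [NeZero k]

theorem sum_target_sub_source (hcirc : ∀ i, (C i).2 = (C (i + 1)).1) :
    ∑ a, (xq n (C a).2 - xq n (C a).1) = 0 := by
  simp only [hcirc, Finset.sum_sub_distrib]
  rw [sub_eq_zero]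
  exact Fintype.sum_equiv (Equiv.addRight 1) _ _ fun _ => rfl

theorem source_sub_target_mul_omegaRest (hcirc : ∀ i, (C i).2 = (C (i + 1)).1)
    {i j : Fin k} (hij : i ≠ j) :
    (xq n (C j).1 - xq n (C j).2) * omegaRest n k C i j =
      (xq n (C i).2 - xq n (C i).1) * omegaRest n k C i j := by
  have hsum := congrArg (· * omegaRest n k C i j) (sum_target_sub_source C hcirc)
  simp only [Finset.sum_mul, zero_mul] at hsum
  rw [Fintype.sum_eq_add i j hij fun a ha => target_sub_source_mul_omegaRest C ha.1 ha.2]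
    at hsum
  rw [← neg_sub, neg_mul, neg_eq_iff_add_eq_zero, add_comm, hsum]

end Circuit

theorem neg_one_pow_rev_add_rev {R : Type*} [Ring R] {k : ℕ} (i j : Fin k) :
    (-1 : R) ^ ((j.rev : ℕ) + i.rev) = (-1) ^ ((i : ℕ) + j) := by
  rw [neg_one_pow_eq_pow_mod_two, neg_one_pow_eq_pow_mod_two (i + j : ℕ), Fin.val_rev,
    Fin.val_rev]
  congr 1
  omega

theorem L_reverse_circuit_general (n k : ℕ) [NeZero k] (C : Fin k → Fin n × Fin n)
    (hcirc : ∀ i, (C i).2 = (C (i + 1)).1) :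
    Lelt n k (fun i => Prod.swap (C (Fin.rev i))) =
      ((-1 : ℚ) ^ ((k - 2).choose 2)) • Lelt n k C := by
  rw [Lelt, Lelt, Finset.smul_sum]
  refine Finset.sum_nbij' (fun p => (p.2.rev, p.1.rev)) (fun p => (p.2.rev, p.1.rev))
    (by simp) (by simp) (by simp) (by simp) ?_
  rintro ⟨i, j⟩ hij
  replace hij : i < j := (Finset.mem_filter.mp hij).2
  simp only [Prod.fst_swap, Prod.snd_swap]
  rw [omegaRest_reverse C i j hij.ne, mul_smul_comm,
    source_sub_target_mul_omegaRest C hcirc (Fin.rev_lt_rev.mpr hij).ne, smul_smul, smul_smul,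
    mul_comm, neg_one_pow_rev_add_rev]

/-- For a circuit `C = (c_1,…,c_k)` in `K_n` (an oriented simple cycle with a
starting vertex: consecutive edges composable cyclically, with pairwise distinct sources),
the reversed circuit `C~` (edges reversed and taken in the opposite order) satisfies
`L_{C~} = (−1)^{binom(k−2,2)} · L_C` in the model algebra. -/
theorem L_reverse_circuit (n k : ℕ) [NeZero k] (C : Fin k → Fin n × Fin n)
    (hcirc : ∀ i, (C i).2 = (C (i + 1)).1)
    (hinj : Function.Injective (fun i => (C i).1)) :
    Lelt n k (fun i => Prod.swap (C (Fin.rev i))) =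
      ((-1 : ℚ) ^ ((k - 2).choose 2)) • Lelt n k C :=
  L_reverse_circuit_general n k C hcirc
end

section
/- For every circuit C = (c_1,...,c_k) in K_n, the element L_C = Σ_{1≤i<j≤k} (−1)^{i+j} (x_{t(c_i)} − x_{s(c_i)}) ω_{C∖{c_i,c_j}} lies in the kernel of the differential d_2 of the Kriz/Bibby model E_2 for the braid elliptic arrangement; i.e., d_2(L_C) = 0. -/
/-!
Write `X a`, `Y a`, `W a` for `x_{t(c_a)} - x_{s(c_a)}`, `y_{t(c_a)} - y_{s(c_a)}`, `ω_{c_a}`.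
All of them lie in the additive span of the generators, where multiplication anticommutes and
squares vanish. As `d (W a) = X a * Y a` is even, `d` differentiates `ω_D` factor by factor with
the sign of the factor's position, so `d L_C` is a signed sum of `X i * X a * Y a * ω_T` over pairs
`i < j`, `a ∉ {i, j}`, with `T = C ∖ {i, j, a}`. Grouped by the sorted triple `p < q < r` of
`{i, j, a}`, each group is `±(X p X r Y r - X p X q Y q + X q X p Y p) ω_T`. Since `C` is closed,
`∑ X a = 0`, while `X b * ω_T = 0` for `b ∈ T`; hence `(X p + X q + X r) ω_T = 0`, likewise for
`Y`, and these two relations make every group vanish.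
-/

/-- `a` is one of the (odd, degree-one) generators `x_i`, `y_i`, `ω_e` of the Kriz/Bibby
model `E₂` for the braid elliptic arrangement. -/
def IsGen {n : ℕ} {A : Type*} (x y : Fin n → A) (w : Sym2 (Fin n) → A) (a : A) : Prop :=
  (∃ i, a = x i) ∨ (∃ i, a = y i) ∨ (∃ e, a = w e)

open Finset

section Anticommute

variable {A : Type*} [Ring A]

theorem mul_eq_neg_mul_of_mem_closure {S : Set A}
    (hS : ∀ a b, a ∈ S → b ∈ S → a * b = -(b * a)) :
    ∀ a ∈ AddSubgroup.closure S, ∀ b ∈ AddSubgroup.closure S, a * b = -(b * a) := by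
  intro a ha b hb
  induction ha, hb using AddSubgroup.closure_induction₂ with
  | mem a b ha hb => exact hS a b ha hb
  | zero_left => simp
  | zero_right => simp
  | add_left a b c _ _ _ hac hbc => rw [add_mul, mul_add, hac, hbc, neg_add]
  | add_right b c a _ _ _ hab hac => rw [mul_add, add_mul, hab, hac, neg_add]
  | neg_left a b _ _ h => rw [neg_mul, mul_neg, h]
  | neg_right a b _ _ h => rw [neg_mul, mul_neg, h]

theorem mul_self_eq_zero_of_mem_closure {S : Set A}
    (hS : ∀ a b, a ∈ S → b ∈ S → a * b = -(b * a)) (hsq : ∀ a, a ∈ S → a * a = 0) :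
    ∀ a ∈ AddSubgroup.closure S, a * a = 0 := by
  intro a ha
  induction ha using AddSubgroup.closure_induction with
  | mem a ha => exact hsq a ha
  | zero => simp
  | add a b ha hb haa hbb =>
    rw [add_mul, mul_add, mul_add, haa, hbb, mul_eq_neg_mul_of_mem_closure hS a ha b hb]
    abel
  | neg a _ h => rw [neg_mul_neg, h]

theorem commute_mul_of_anticomm {g u v : A} (hu : g * u = -(u * g)) (hv : g * v = -(v * g)) :
    Commute g (u * v) := by
  rw [Commute, SemiconjBy, ← mul_assoc, hu, neg_mul, mul_assoc, hv, mul_neg, neg_neg, mul_assoc]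

theorem mul_list_prod_eq_zero_of_mem {u v : A} {l : List A} (hv : v ∈ l) (huv : u * v = 0)
    (hl : ∀ g ∈ l, u * g = -(g * u)) : u * l.prod = 0 := by
  induction l with
  | nil => simp at hv
  | cons a t ih =>
    rw [List.prod_cons, ← mul_assoc]
    rcases List.mem_cons.1 hv with rfl | hv
    · rw [huv, zero_mul]
    · rw [hl a List.mem_cons_self, neg_mul, mul_assoc,
        ih hv fun g hg => hl g (List.mem_cons_of_mem a hg), mul_zero, neg_zero]

theorem sum_mul_eq_zero_of_sum_eq_zero {ι : Type*} [Fintype ι] [DecidableEq ι] {X : ι → A}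
    (hX : ∑ b, X b = 0) {P : A} (s : Finset ι) (hP : ∀ b ∉ s, X b * P = 0) :
    (∑ b ∈ s, X b) * P = 0 := by
  rw [eq_neg_of_add_eq_zero_left ((sum_add_sum_compl s X).trans hX), neg_mul, sum_mul,
    sum_eq_zero fun b hb => hP b (mem_compl.1 hb), neg_zero]

theorem anticomm_triple_eq_zero {V : AddSubgroup A} (hV : ∀ a ∈ V, ∀ b ∈ V, a * b = -(b * a))
    (hVsq : ∀ a ∈ V, a * a = 0) {X₁ X₂ X₃ Y₁ Y₂ Y₃ W : A}
    (h₁ : X₁ ∈ V) (h₂ : X₂ ∈ V) (h₃ : X₃ ∈ V) (hY₃ : Y₃ ∈ V)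
    (hX : (X₁ + X₂ + X₃) * W = 0) (hY : (Y₁ + Y₂ + Y₃) * W = 0) :
    X₁ * (X₃ * Y₃ * W) - X₁ * (X₂ * Y₂ * W) + X₂ * (X₁ * Y₁ * W) = 0 := by
  have hY₁₂ : (Y₁ + Y₂) * W = -(Y₃ * W) := eq_neg_of_add_eq_zero_left (by rw [← add_mul, hY])
  have hX₂₃ : (X₂ + X₃) * W = -(X₁ * W) :=
    eq_neg_of_add_eq_zero_left (by rw [← add_mul, add_comm, ← add_assoc, hX])
  have hY₃X₂₃ : (X₂ + X₃) * Y₃ = -(Y₃ * (X₂ + X₃)) := hV _ (add_mem h₂ h₃) _ hY₃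
  calc X₁ * (X₃ * Y₃ * W) - X₁ * (X₂ * Y₂ * W) + X₂ * (X₁ * Y₁ * W)
      = X₁ * (X₃ * Y₃ * W) - X₁ * (X₂ * ((Y₁ + Y₂) * W)) := by
        rw [← mul_assoc X₂, ← mul_assoc X₂, hV _ h₂ _ h₁]; noncomm_ring
    _ = X₁ * ((X₂ + X₃) * Y₃ * W) := by rw [hY₁₂]; noncomm_ring
    _ = X₁ * Y₃ * X₁ * W := by rw [hY₃X₂₃, neg_mul, mul_assoc Y₃, hX₂₃]; noncomm_ring
    _ = 0 := by rw [mul_assoc X₁, hV _ hY₃ _ h₁, mul_neg, ← mul_assoc, hVsq _ h₁]; simp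

end Anticommute

section OrderedProd

variable {A ι : Type*} [Monoid A] [LinearOrder ι] (W : ι → A)

def orderedProd (s : Finset ι) : A :=
  ((s.sort).map W).prod

theorem orderedProd_insert_of_lt {a : ι} {s : Finset ι} (h : ∀ b ∈ s, a < b) :
    orderedProd W (insert a s) = W a * orderedProd W s := by
  rw [orderedProd, sort_insert _ (fun b hb => (h b hb).le) fun ha => lt_irrefl a (h a ha),
    List.map_cons, List.prod_cons, orderedProd]

end OrderedProd

section OddDerivation

variable {R A : Type*} [CommRing R] [Ring A] [Algebra R A]

def IsOddDerivationOn (d : A →ₗ[R] A) (G : A → Prop) : Prop :=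
  ∀ l : List A, (∀ a ∈ l, G a) →
    d l.prod = ∑ i ∈ range l.length,
      ((-1 : R) ^ i) • ((l.take i).prod * d (l.getD i 0) * (l.drop (i + 1)).prod)

variable {d : A →ₗ[R] A} {G : A → Prop}

namespace IsOddDerivationOn

theorem map_one (hd : IsOddDerivationOn d G) : d 1 = 0 := by
  simpa using hd [] (by simp)

theorem map_mul_prod (hd : IsOddDerivationOn d G) {g : A} (hg : G g) {l : List A}
    (hl : ∀ a ∈ l, G a) : d (g * l.prod) = d g * l.prod - g * d l.prod := by
  rw [← List.prod_cons, hd _ (List.forall_mem_cons.2 ⟨hg, hl⟩), hd l hl, List.length_cons,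
    sum_range_succ', mul_sum, sub_eq_neg_add, ← sum_neg_distrib]
  simp only [List.take_succ_cons, List.getD_cons_succ, List.drop_succ_cons, List.prod_cons,
    List.take_zero, List.getD_cons_zero, List.prod_nil, pow_zero, one_smul, one_mul, zero_add,
    pow_succ, mul_neg_one, neg_smul, mul_smul_comm, mul_assoc, List.drop_zero]

theorem map_sub_mul_prod (hd : IsOddDerivationOn d G) {g₁ g₂ : A} (hg₁ : G g₁) (hg₂ : G g₂)
    (hd₁ : d g₁ = 0) (hd₂ : d g₂ = 0) {l : List A} (hl : ∀ a ∈ l, G a) :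
    d ((g₁ - g₂) * l.prod) = -((g₁ - g₂) * d l.prod) := by
  rw [sub_mul, map_sub, hd.map_mul_prod hg₁ hl, hd.map_mul_prod hg₂ hl, hd₁, hd₂, sub_mul]
  noncomm_ring

variable {ι : Type*} [LinearOrder ι] (W : ι → A)

theorem map_orderedProd (hd : IsOddDerivationOn d G) (hW : ∀ a, G (W a))
    (hcomm : ∀ a b, Commute (W a) (d (W b))) (s : Finset ι) :
    d (orderedProd W s) =
      ∑ a ∈ s, (-1 : R) ^ #{b ∈ s | b < a} • (d (W a) * orderedProd W (s.erase a)) := by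
  induction s using Finset.induction_on_min with
  | empty => simp [orderedProd, hd.map_one]
  | insert m s hm ih =>
    have hms : m ∉ s := fun h => lt_irrefl m (hm m h)
    have hfirst : #{b ∈ insert m s | b < m} = 0 := by
      simp only [card_eq_zero, filter_eq_empty_iff, mem_insert]
      rintro b (rfl | hb)
      exacts [lt_irrefl b, (hm b hb).not_gt]
    have hrest : ∀ a ∈ s,
        (-1 : R) ^ #{b ∈ insert m s | b < a} • (d (W a) * orderedProd W ((insert m s).erase a)) =
          -(W m * ((-1 : R) ^ #{b ∈ s | b < a} • (d (W a) * orderedProd W (s.erase a)))) := by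
      intro a ha
      rw [filter_insert, if_pos (hm a ha), card_insert_of_notMem (by simp [hms]),
        erase_insert_of_ne (hm a ha).ne,
        orderedProd_insert_of_lt W fun b hb => hm b (mem_of_mem_erase hb), pow_succ, mul_neg_one,
        neg_smul, mul_smul_comm, ← mul_assoc, ← mul_assoc, (hcomm m a).eq]
    have hlist : ∀ g ∈ (s.sort).map W, G g := by simp [hW]
    have hstep :
        d (W m * orderedProd W s) = d (W m) * orderedProd W s - W m * d (orderedProd W s) :=
      hd.map_mul_prod (hW m) hlist
    rw [orderedProd_insert_of_lt W hm, hstep, ih,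
      sum_insert hms, hfirst, erase_insert hms, sum_congr rfl hrest, sum_neg_distrib, mul_sum,
      pow_zero, one_smul, sub_eq_add_neg]

end IsOddDerivationOn

end OddDerivation

section FinCombinatorics

variable {k : ℕ}

theorem card_filter_compl_lt_add_card_filter_lt (s : Finset (Fin k)) (a : Fin k) :
    #{b ∈ sᶜ | b < a} + #{b ∈ s | b < a} = a := by
  rw [← Fin.card_Iio, ← card_union_of_disjoint (disjoint_filter_filter disjoint_compl_left)]
  congr 1
  ext b
  by_cases b ∈ s <;> simp [*]

theorem sum_pairs_sum_compl {M : Type*} [AddCommMonoid M] (g : Fin k → Fin k → Fin k → M) :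
    ∑ p ∈ univ.filter (fun p : Fin k × Fin k => p.1 < p.2), ∑ a ∈ {p.1, p.2}ᶜ, g p.1 p.2 a =
      ∑ t ∈ univ.filter (fun t : Fin k × Fin k × Fin k => t.1 < t.2.1 ∧ t.2.1 < t.2.2),
        (g t.1 t.2.1 t.2.2 + g t.1 t.2.2 t.2.1 + g t.2.1 t.2.2 t.1) := by
  have hsplit : ∀ i j a : Fin k,
      (if i < j then (if a ∈ ({i, j} : Finset (Fin k))ᶜ then g i j a else 0) else 0) =
        (if i < j ∧ j < a then g i j a else 0) + (if i < a ∧ a < j then g i j a else 0) +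
          (if a < i ∧ i < j then g i j a else 0) := by
    intro i j a
    simp only [mem_compl, mem_insert, mem_singleton, not_or]
    split_ifs <;> grind
  calc _ = ∑ i, ∑ j, ∑ a,
        (if i < j then (if a ∈ ({i, j} : Finset (Fin k))ᶜ then g i j a else 0) else 0) := by
        rw [sum_filter, Fintype.sum_prod_type]
        refine sum_congr rfl fun i _ => sum_congr rfl fun j _ => ?_
        split_ifs
        exacts [(Fintype.sum_ite_mem _ _).symm, by simp]
    _ = ∑ i, ∑ j, ∑ a, (if i < j ∧ j < a then g i j a else 0) +
          ∑ i, ∑ a, ∑ j, (if i < a ∧ a < j then g i j a else 0) +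
          ∑ a, ∑ i, ∑ j, (if a < i ∧ i < j then g i j a else 0) := by
        simp only [hsplit, sum_add_distrib]
        congr 1
        · congr 1
          exact sum_congr rfl fun i _ => sum_comm
        · exact (sum_congr rfl fun i _ => sum_comm).trans sum_comm
    _ = _ := by
        rw [sum_filter, Fintype.sum_prod_type]
        simp only [Fintype.sum_prod_type, ite_add_zero, sum_add_distrib]

theorem card_filter_compl_pair_lt {p q r : Fin k} (hpq : p < q) (hqr : q < r) :
    #{b ∈ {p, q}ᶜ | b < r} + 2 = r ∧ #{b ∈ {p, r}ᶜ | b < q} + 1 = q ∧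
      #{b ∈ {q, r}ᶜ | b < p} = p := by
  have h₁ := card_filter_compl_lt_add_card_filter_lt {p, q} r
  have h₂ := card_filter_compl_lt_add_card_filter_lt {p, r} q
  have h₃ := card_filter_compl_lt_add_card_filter_lt {q, r} p
  simp only [filter_insert, filter_singleton, hpq, hqr, hpq.trans hqr, hpq.not_gt, hqr.not_gt,
    (hpq.trans hqr).not_gt, if_true, if_false] at h₁ h₂ h₃
  simp_all [card_pair hpq.ne]

theorem sum_pairs_sum_compl_signed {R M : Type*} [CommRing R] [AddCommGroup M] [Module R M]
    (F : Fin k → Fin k → Finset (Fin k) → M) :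
    ∑ p ∈ univ.filter (fun p : Fin k × Fin k => p.1 < p.2), ∑ a ∈ {p.1, p.2}ᶜ,
        (-1 : R) ^ ((p.1 : ℕ) + p.2 + #{b ∈ {p.1, p.2}ᶜ | b < a}) •
          F p.1 a (({p.1, p.2}ᶜ : Finset (Fin k)).erase a) =
      ∑ t ∈ univ.filter (fun t : Fin k × Fin k × Fin k => t.1 < t.2.1 ∧ t.2.1 < t.2.2),
        (-1 : R) ^ ((t.1 : ℕ) + t.2.1 + t.2.2) •
          (F t.1 t.2.2 {t.1, t.2.1, t.2.2}ᶜ - F t.1 t.2.1 {t.1, t.2.1, t.2.2}ᶜ +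
            F t.2.1 t.1 {t.1, t.2.1, t.2.2}ᶜ) := by
  rw [sum_pairs_sum_compl fun i j a => (-1 : R) ^ ((i : ℕ) + j + #{b ∈ {i, j}ᶜ | b < a}) •
    F i a (({i, j}ᶜ : Finset (Fin k)).erase a)]
  refine sum_congr rfl fun ⟨p, q, r⟩ ht => ?_
  obtain ⟨hpq, hqr⟩ : p < q ∧ q < r := by simpa using ht
  obtain ⟨h₁, h₂, h₃⟩ := card_filter_compl_pair_lt hpq hqr
  have hT₁ : ({p, q}ᶜ : Finset (Fin k)).erase r = {p, q, r}ᶜ := by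
    ext; simp only [mem_erase, mem_compl, mem_insert, mem_singleton]; tauto
  have hT₂ : ({p, r}ᶜ : Finset (Fin k)).erase q = {p, q, r}ᶜ := by
    ext; simp only [mem_erase, mem_compl, mem_insert, mem_singleton]; tauto
  have hT₃ : ({q, r}ᶜ : Finset (Fin k)).erase p = {p, q, r}ᶜ := by
    ext; simp only [mem_erase, mem_compl, mem_insert, mem_singleton]; tauto
  have s₁ : (-1 : R) ^ ((p : ℕ) + q + #{b ∈ {p, q}ᶜ | b < r}) = (-1) ^ ((p : ℕ) + q + r) := by
    rw [← h₁]; ring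
  have s₂ : (-1 : R) ^ ((p : ℕ) + r + #{b ∈ {p, r}ᶜ | b < q}) = -(-1) ^ ((p : ℕ) + q + r) := by
    rw [← h₂]; ring
  have s₃ : (-1 : R) ^ ((q : ℕ) + r + #{b ∈ {q, r}ᶜ | b < p}) = (-1) ^ ((p : ℕ) + q + r) := by
    rw [h₃]; ring
  rw [hT₁, hT₂, hT₃, s₁, s₂, s₃, neg_smul, ← sub_eq_add_neg, ← smul_sub, ← smul_add]

theorem sum_sub_eq_zero_of_closed_walk [NeZero k] {α M : Type*} [AddCommGroup M]
    {C : Fin k → α × α} (hC : ∀ i, (C i).2 = (C (i + 1)).1) (f : α → M) :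
    ∑ i, (f (C i).2 - f (C i).1) = 0 := by
  rw [sum_sub_distrib, sub_eq_zero]
  simp only [hC]
  exact Fintype.sum_equiv (Equiv.addRight 1) _ _ fun i => rfl

theorem orderedProd_compl_pair {A : Type*} [Monoid A] (W : Fin k → A) (i j : Fin k) :
    orderedProd W {i, j}ᶜ = (((List.finRange k).filter (fun a => a ≠ i ∧ a ≠ j)).map W).prod := by
  rw [orderedProd, (sortedLT_sort _).eq_of_mem_iff
    ((List.sortedLT_finRange k).pairwise.filter fun a => a ≠ i ∧ a ≠ j).sortedLT (by simp)]

end FinCombinatorics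

section Circuit

variable {R A : Type*} [CommRing R] [Ring A] [Algebra R A] {k : ℕ}

theorem mul_orderedProd_eq_zero_of_mem {ι : Type*} [LinearOrder ι] {W : ι → A} {u : A}
    {s : Finset ι} {b : ι} (hb : b ∈ s) (hub : u * W b = 0) (hu : ∀ c, u * W c = -(W c * u)) :
    u * orderedProd W s = 0 :=
  mul_list_prod_eq_zero_of_mem (List.mem_map_of_mem (mem_sort _ |>.2 hb)) hub
    (by simp only [List.forall_mem_map]; exact fun c _ => hu c)

theorem sum_mul_orderedProd_compl_eq_zero {V : AddSubgroup A}
    (hV : ∀ a ∈ V, ∀ b ∈ V, a * b = -(b * a)) {U W : Fin k → A} (hUV : ∀ a, U a ∈ V)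
    (hWV : ∀ a, W a ∈ V) (hUW : ∀ a, U a * W a = 0) (hU : ∑ a, U a = 0) (s : Finset (Fin k)) :
    (∑ a ∈ s, U a) * orderedProd W sᶜ = 0 :=
  sum_mul_eq_zero_of_sum_eq_zero hU s fun b hb =>
    mul_orderedProd_eq_zero_of_mem (mem_compl.2 hb) (hUW b) fun c => hV _ (hUV b) _ (hWV c)

variable (R) in
/-- `L_C`, for `X a = x_{t(c_a)} - x_{s(c_a)}` and `W a = ω_{c_a}`. -/
def circuitL (X W : Fin k → A) : A :=
  ∑ p ∈ univ.filter (fun p : Fin k × Fin k => p.1 < p.2),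
    (-1 : R) ^ ((p.1 : ℕ) + p.2) • (X p.1 * orderedProd W {p.1, p.2}ᶜ)

theorem map_circuitL_eq_zero {d : A →ₗ[R] A} {G : A → Prop} (hd : IsOddDerivationOn d G)
    {V : AddSubgroup A} (hV : ∀ a ∈ V, ∀ b ∈ V, a * b = -(b * a)) (hVsq : ∀ a ∈ V, a * a = 0)
    {X Y W : Fin k → A} (hXV : ∀ a, X a ∈ V) (hYV : ∀ a, Y a ∈ V) (hWV : ∀ a, W a ∈ V)
    (hWG : ∀ a, G (W a)) (hdW : ∀ a, d (W a) = X a * Y a)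
    (hdX : ∀ a s, d (X a * orderedProd W s) = -(X a * d (orderedProd W s)))
    (hXW : ∀ a, X a * W a = 0) (hYW : ∀ a, Y a * W a = 0)
    (hXsum : ∑ a, X a = 0) (hYsum : ∑ a, Y a = 0) :
    d (circuitL R X W) = 0 := by
  have hcomm : ∀ a b, Commute (W a) (d (W b)) := fun a b => by
    rw [hdW]; exact commute_mul_of_anticomm (hV _ (hWV a) _ (hXV b)) (hV _ (hWV a) _ (hYV b))
  have hterm : ∀ i j : Fin k, d (X i * orderedProd W {i, j}ᶜ) =
      -∑ a ∈ {i, j}ᶜ, (-1 : R) ^ #{b ∈ {i, j}ᶜ | b < a} •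
        (X i * (X a * Y a * orderedProd W (({i, j}ᶜ : Finset (Fin k)).erase a))) := by
    intro i j
    simp only [hdX, hd.map_orderedProd W hWG hcomm, hdW, mul_sum, mul_smul_comm]
  rw [circuitL, map_sum]
  simp only [map_smul, hterm, smul_neg, smul_sum, smul_smul, ← pow_add]
  rw [sum_neg_distrib, sum_pairs_sum_compl_signed fun i a T => X i * (X a * Y a * orderedProd W T),
    neg_eq_zero]
  refine sum_eq_zero fun ⟨p, q, r⟩ ht => ?_
  obtain ⟨hpq, hqr⟩ : p < q ∧ q < r := by simpa using ht
  have hsum : ∀ U : Fin k → A, ∑ a ∈ {p, q, r}, U a = U p + U q + U r := fun U => by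
    rw [sum_insert (by simp [hpq.ne, (hpq.trans hqr).ne]), sum_pair hqr.ne, add_assoc]
  have hX := sum_mul_orderedProd_compl_eq_zero hV hXV hWV hXW hXsum {p, q, r}
  have hY := sum_mul_orderedProd_compl_eq_zero hV hYV hWV hYW hYsum {p, q, r}
  rw [hsum] at hX hY
  rw [anticomm_triple_eq_zero hV hVsq (hXV p) (hXV q) (hXV r) (hYV r) hX hY,
    smul_zero]

end Circuit

theorem d2_LC_eq_zero_general (n k : ℕ) [NeZero k] (A : Type*) [Ring A] [Algebra ℚ A]
    (x y : Fin n → A) (w : Sym2 (Fin n) → A) (d : A →ₗ[ℚ] A)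
    (hanti : ∀ a b : A, IsGen x y w a → IsGen x y w b → a * b = -(b * a))
    (hsq : ∀ a : A, IsGen x y w a → a * a = 0)
    (hxw : ∀ i j : Fin n, (x i - x j) * w s(i, j) = 0)
    (hyw : ∀ i j : Fin n, (y i - y j) * w s(i, j) = 0)
    (hdx : ∀ i, d (x i) = 0)
    (hdw : ∀ i j : Fin n, d (w s(i, j)) = (x i - x j) * (y i - y j))
    (hderiv : ∀ l : List A, (∀ a ∈ l, IsGen x y w a) →
      d l.prod = ∑ i ∈ Finset.range l.length,
        ((-1 : ℚ) ^ i) • ((l.take i).prod * d (l.getD i 0) * (l.drop (i + 1)).prod))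
    (C : Fin k → Fin n × Fin n)
    (hcirc : ∀ i, (C i).2 = (C (i + 1)).1) :
    d (∑ p ∈ Finset.univ.filter (fun p : Fin k × Fin k => p.1 < p.2),
        ((-1 : ℚ) ^ ((p.1 : ℕ) + (p.2 : ℕ))) •
          ((x (C p.1).2 - x (C p.1).1) *
            (((List.finRange k).filter (fun a => a ≠ p.1 ∧ a ≠ p.2)).map
              (fun a => w (Sym2.mk (C a).1 (C a).2))).prod)) = 0 := by
  have hgen : ∀ {a}, IsGen x y w a → a ∈ AddSubgroup.closure {a | IsGen x y w a} :=
    fun h => AddSubgroup.subset_closure h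
  have hx : ∀ i, IsGen x y w (x i) := fun i => .inl ⟨i, rfl⟩
  have hy : ∀ i, IsGen x y w (y i) := fun i => .inr (.inl ⟨i, rfl⟩)
  have hw : ∀ e, IsGen x y w (w e) := fun e => .inr (.inr ⟨e, rfl⟩)
  have key := map_circuitL_eq_zero (G := IsGen x y w) (d := d)
    (X := fun a => x (C a).2 - x (C a).1) (Y := fun a => y (C a).2 - y (C a).1)
    (W := fun a => w s((C a).1, (C a).2)) hderiv
    (mul_eq_neg_mul_of_mem_closure (S := {a | IsGen x y w a}) hanti)
    (mul_self_eq_zero_of_mem_closure (S := {a | IsGen x y w a}) hanti hsq)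
    (fun _ => sub_mem (hgen (hx _)) (hgen (hx _))) (fun _ => sub_mem (hgen (hy _)) (hgen (hy _)))
    (fun _ => hgen (hw _)) (fun _ => hw _)
    (fun _ => by rw [hdw, ← neg_sub, ← neg_sub (y _), neg_mul_neg])
    (fun _ _ => IsOddDerivationOn.map_sub_mul_prod hderiv (hx _) (hx _) (hdx _) (hdx _)
      (by simp [hw]))
    (fun _ => by rw [Sym2.eq_swap, hxw]) (fun _ => by rw [Sym2.eq_swap, hyw])
    (sum_sub_eq_zero_of_closed_walk hcirc x) (sum_sub_eq_zero_of_closed_walk hcirc y)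
  simpa only [circuitL, orderedProd_compl_pair] using key

/-- In the Kriz/Bibby model `E₂` of the configuration space of `n` points on
an elliptic curve — i.e. in any `ℚ`-algebra with odd generators `x_i, y_i` (bidegree `(1,0)`)
and `ω_{i,j} = ω_e` for unordered edges `e` (bidegree `(0,1)`) which pairwise anticommute,
satisfy `(x_i−x_j)ω_{ij} = 0`, `(y_i−y_j)ω_{ij} = 0` and the Arnold/Orlik–Solomon relations,
equipped with a linear map `d = d₂` which vanishes on the `x`'s and `y`'s, sends
`ω_{ij} ↦ (x_i−x_j)(y_i−y_j)`, and is an odd derivation on products of generators — the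
element `L_C = Σ_{i<j}(−1)^{i+j}(x_{t(c_i)}−x_{s(c_i)})ω_{C∖{c_i,c_j}}` associated to any
circuit `C = (c_1,…,c_k)` of `K_n` lies in the kernel of `d₂`: `d₂(L_C) = 0`. -/
theorem d2_LC_eq_zero (n k : ℕ) [NeZero k] (A : Type*) [Ring A] [Algebra ℚ A]
    (x y : Fin n → A) (w : Sym2 (Fin n) → A) (d : A →ₗ[ℚ] A)
    (hanti : ∀ a b : A, IsGen x y w a → IsGen x y w b → a * b = -(b * a))
    (hsq : ∀ a : A, IsGen x y w a → a * a = 0)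
    (hxw : ∀ i j : Fin n, (x i - x j) * w s(i, j) = 0)
    (hyw : ∀ i j : Fin n, (y i - y j) * w s(i, j) = 0)
    (harnold : ∀ i j l : Fin n,
      w s(i, j) * w s(j, l) + w s(j, l) * w s(i, l) + w s(i, l) * w s(i, j) = 0)
    (hdx : ∀ i, d (x i) = 0) (hdy : ∀ i, d (y i) = 0)
    (hdw : ∀ i j : Fin n, d (w s(i, j)) = (x i - x j) * (y i - y j))
    (hderiv : ∀ l : List A, (∀ a ∈ l, IsGen x y w a) →
      d l.prod = ∑ i ∈ Finset.range l.length,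
        ((-1 : ℚ) ^ i) • ((l.take i).prod * d (l.getD i 0) * (l.drop (i + 1)).prod))
    (C : Fin k → Fin n × Fin n)
    (hcirc : ∀ i, (C i).2 = (C (i + 1)).1)
    (hinj : Function.Injective (fun i => (C i).1)) :
    d (∑ p ∈ Finset.univ.filter (fun p : Fin k × Fin k => p.1 < p.2),
        ((-1 : ℚ) ^ ((p.1 : ℕ) + (p.2 : ℕ))) •
          ((x (C p.1).2 - x (C p.1).1) *
            (((List.finRange k).filter (fun a => a ≠ p.1 ∧ a ≠ p.2)).map
              (fun a => w (Sym2.mk (C a).1 (C a).2))).prod)) = 0 :=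
  d2_LC_eq_zero_general n k A x y w d hanti hsq hxw hyw hdx hdw hderiv C hcirc
end
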